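/- arXiv:1810.05780 — 2 statements merged into one kernel-verified Lean document; each statement's English description precedes it below -/
import Mathlib

section
/- Let u and v be non-collinear unit vectors in ℝ³. The subgroup of SO(3) generated by all rotations about u together with all rotations about v acts transitively on the unit sphere. -/
/-!
Replacing `v` by `-v`, which generates the same rotations, we may assume that the angle `β`
between the axes satisfies `0 < β ≤ π / 2`. Rotations about `b` move `x` along a circle, and the
angles `∠(n, R_b(φ) x)` they realise are exactly the third sides of the spherical triangles with
two sides `∠(n, b)` and `∠(b, x)`. Hence a rotation about `u` followed by one about `v` takes a point
at angle `θ` from `u` to one at angle `max 0 (θ - 2β)` from `u`, and finitely many such moves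
bring every point of the sphere to `u`.
-/

/-- Rotation of ℝ³ by angle `φ` about the axis through the origin in direction `u`
(Rodrigues' formula; when `‖u‖ = 1` this is the usual rotation `R_u(φ)`). -/
noncomputable def rot (u : EuclideanSpace ℝ (Fin 3)) (φ : ℝ) (x : EuclideanSpace ℝ (Fin 3)) :
    EuclideanSpace ℝ (Fin 3) :=
  let c : EuclideanSpace ℝ (Fin 3) := WithLp.toLp 2 (crossProduct u x)
  Real.cos φ • x + Real.sin φ • c + ((1 - Real.cos φ) * (inner ℝ u x : ℝ)) • u

/-- SO(3): the subgroup of the orthogonal group of 3×3 real matrices consisting of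
matrices of determinant 1 (acting on ℝ³ by matrix-vector multiplication). -/
def SO3 : Subgroup (Matrix.orthogonalGroup (Fin 3) ℝ) where
  carrier := {A | (A : Matrix (Fin 3) (Fin 3) ℝ).det = 1}
  one_mem' := by simp
  mul_mem' := by
    intro a b ha hb
    simp only [Set.mem_setOf_eq] at *
    rw [Submonoid.coe_mul, Matrix.det_mul, ha, hb, one_mul]
  inv_mem' := by
    intro a ha
    simp only [Set.mem_setOf_eq] at *
    have h : ((a⁻¹ : Matrix.orthogonalGroup (Fin 3) ℝ) : Matrix (Fin 3) (Fin 3) ℝ) =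
        star (a : Matrix (Fin 3) (Fin 3) ℝ) := rfl
    rw [h, Matrix.star_eq_conjTranspose, Matrix.det_conjTranspose, ha, star_one]


open Real InnerProductGeometry Matrix

local notation "ℝ³" => EuclideanSpace ℝ (Fin 3)

theorem Matrix.mem_orthogonalGroup_of_dotProduct_mulVec {n R : Type*} [Fintype n] [DecidableEq n]
    [CommRing R] {A : Matrix n n R} (h : ∀ x y, A *ᵥ x ⬝ᵥ A *ᵥ y = x ⬝ᵥ y) :
    A ∈ orthogonalGroup n R := by
  rw [mem_orthogonalGroup_iff']
  ext i j
  simpa [mulVec_single_one, mul_apply, dotProduct, one_apply, Pi.single_apply, eq_comm]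
    using h (Pi.single i 1) (Pi.single j 1)

theorem exists_mul_cos_add_mul_sin_eq {p q d : ℝ} (h : d ^ 2 ≤ p ^ 2 + q ^ 2) :
    ∃ φ, p * cos φ + q * sin φ = d := by
  set z : ℂ := ⟨p, q⟩
  have hd : |d| ≤ ‖z‖ := by
    apply abs_le_of_sq_le_sq _ (norm_nonneg z)
    rwa [Complex.sq_norm, Complex.normSq_apply, ← sq, ← sq]
  refine ⟨z.arg + arccos (d / ‖z‖), ?_⟩
  have hp : p = ‖z‖ * cos z.arg := (Complex.norm_mul_cos_arg z).symm
  have hq : q = ‖z‖ * sin z.arg := (Complex.norm_mul_sin_arg z).symm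
  rcases eq_or_ne ‖z‖ 0 with hz | hz
  · have hd0 : d = 0 := abs_nonpos_iff.1 (hz ▸ hd)
    rw [hp, hq, hz, hd0]
    ring
  · have hdz : -1 ≤ d / ‖z‖ ∧ d / ‖z‖ ≤ 1 := by
      rw [← abs_le, abs_div, abs_norm, div_le_one ((norm_nonneg z).lt_of_ne' hz)]
      exact hd
    calc p * cos (z.arg + arccos (d / ‖z‖)) + q * sin (z.arg + arccos (d / ‖z‖))
        = ‖z‖ * cos (arccos (d / ‖z‖)) := by
          rw [hp, hq, cos_add, sin_add]
          linear_combination ‖z‖ * cos (arccos (d / ‖z‖)) * sin_sq_add_cos_sq z.arg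
      _ = d := by rw [cos_arccos hdz.1 hdz.2, mul_div_cancel₀ _ hz]

namespace EuclideanSpace

lemma inner_eq_fin_three (x y : ℝ³) : inner ℝ x y = x 0 * y 0 + x 1 * y 1 + x 2 * y 2 := by
  simp only [PiLp.inner_apply, RCLike.inner_apply, conj_trivial, Fin.sum_univ_three]
  ring

end EuclideanSpace

open EuclideanSpace

lemma inner_crossProduct_sq (n b x : ℝ³) :
    inner ℝ n (WithLp.toLp 2 (crossProduct b x)) ^ 2 =
      inner ℝ n n * inner ℝ b b * inner ℝ x x
      + 2 * inner ℝ n b * inner ℝ b x * inner ℝ n x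
      - inner ℝ n b ^ 2 * inner ℝ x x - inner ℝ b x ^ 2 * inner ℝ n n
      - inner ℝ n x ^ 2 * inner ℝ b b := by
  simp only [inner_eq_fin_three, cross_apply, cons_val_zero, cons_val_one,
    cons_val_two, head_cons, tail_cons]
  ring

lemma inner_rot (n b : ℝ³) (φ : ℝ) (x : ℝ³) :
    inner ℝ n (rot b φ x) = inner ℝ n b * inner ℝ b x
      + (inner ℝ n x - inner ℝ n b * inner ℝ b x) * cos φ
      + inner ℝ n (WithLp.toLp 2 (crossProduct b x)) * sin φ := by
  simp only [rot, inner_add_right, inner_smul_right]; ring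

lemma inner_rot_rot {b : ℝ³} (hb : ‖b‖ = 1) (φ : ℝ) (x y : ℝ³) :
    inner ℝ (rot b φ x) (rot b φ y) = inner ℝ x y := by
  have h : inner ℝ (rot b φ x) (rot b φ y)
      = (cos φ ^ 2 + sin φ ^ 2 * inner ℝ b b) * inner ℝ x y
        + ((1 - cos φ) ^ 2 * inner ℝ b b + 2 * cos φ * (1 - cos φ) - sin φ ^ 2)
          * inner ℝ b x * inner ℝ b y := by
    simp only [rot, inner_eq_fin_three, PiLp.add_apply, PiLp.smul_apply, smul_eq_mul, cross_apply,
      cons_val_zero, cons_val_one, cons_val_two, head_cons, tail_cons]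
    ring
  rw [h, real_inner_self_eq_norm_sq, hb]
  linear_combination (inner ℝ x y - inner ℝ b x * inner ℝ b y) * sin_sq_add_cos_sq φ

lemma norm_rot {b : ℝ³} (hb : ‖b‖ = 1) (φ : ℝ) (x : ℝ³) : ‖rot b φ x‖ = ‖x‖ := by
  rw [norm_eq_sqrt_real_inner, inner_rot_rot hb, ← norm_eq_sqrt_real_inner]

lemma rot_neg (v : ℝ³) (φ : ℝ) (x : ℝ³) : rot (-v) φ x = rot v (-φ) x := by
  simp only [rot, WithLp.ofLp_neg, LinearMap.map_neg₂, WithLp.toLp_neg, inner_neg_left, cos_neg,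
    sin_neg, smul_neg, neg_smul, mul_neg, neg_neg]

lemma exists_inner_rot_eq {n b x : ℝ³} (hn : ‖n‖ = 1) (hb : ‖b‖ = 1) (hx : ‖x‖ = 1) {c : ℝ}
    (hc : (c - inner ℝ n b * inner ℝ b x) ^ 2 ≤ (1 - inner ℝ n b ^ 2) * (1 - inner ℝ b x ^ 2)) :
    ∃ φ, inner ℝ n (rot b φ x) = c := by
  have hpq : (inner ℝ n x - inner ℝ n b * inner ℝ b x) ^ 2
      + inner ℝ n (WithLp.toLp 2 (crossProduct b x)) ^ 2
      = (1 - inner ℝ n b ^ 2) * (1 - inner ℝ b x ^ 2) := by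
    rw [inner_crossProduct_sq, real_inner_self_eq_norm_sq, real_inner_self_eq_norm_sq,
      real_inner_self_eq_norm_sq, hn, hb, hx]
    ring
  obtain ⟨φ, hφ⟩ := exists_mul_cos_add_mul_sin_eq (hpq ▸ hc)
  exact ⟨φ, by rw [inner_rot, add_assoc, hφ]; ring⟩

-- Rodrigues' matrix `cos φ • 1 + sin φ • [u]ₓ + (1 - cos φ) • u uᵀ`
noncomputable def rotMatrix (u : ℝ³) (φ : ℝ) : Matrix (Fin 3) (Fin 3) ℝ :=
  let c := cos φ; let s := sin φ
  !![c + (1 - c) * u 0 * u 0, -s * u 2 + (1 - c) * u 0 * u 1, s * u 1 + (1 - c) * u 0 * u 2;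
    s * u 2 + (1 - c) * u 1 * u 0, c + (1 - c) * u 1 * u 1, -s * u 0 + (1 - c) * u 1 * u 2;
    -s * u 1 + (1 - c) * u 2 * u 0, s * u 0 + (1 - c) * u 2 * u 1, c + (1 - c) * u 2 * u 2]

lemma rotMatrix_mulVec (u : ℝ³) (φ : ℝ) (z : Fin 3 → ℝ) :
    rotMatrix u φ *ᵥ z = rot u φ (WithLp.toLp 2 z) := by
  ext i
  fin_cases i <;>
    simp only [rotMatrix, rot, mulVec, dotProduct, Fin.sum_univ_three, inner_eq_fin_three,
      cross_apply, of_apply, cons_val', cons_val_fin_one, cons_val_zero, cons_val_one, cons_val,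
      Fin.zero_eta, Fin.mk_one, Fin.reduceFinMk, PiLp.add_apply, PiLp.smul_apply, smul_eq_mul] <;>
    ring

lemma rotMatrix_mem_orthogonalGroup {u : ℝ³} (hu : ‖u‖ = 1) (φ : ℝ) :
    rotMatrix u φ ∈ orthogonalGroup (Fin 3) ℝ := by
  refine mem_orthogonalGroup_of_dotProduct_mulVec fun x y => ?_
  simpa [rotMatrix_mulVec, EuclideanSpace.inner_eq_star_dotProduct, dotProduct_comm]
    using inner_rot_rot hu φ (WithLp.toLp 2 x) (WithLp.toLp 2 y)

lemma det_rotMatrix {u : ℝ³} (hu : ‖u‖ = 1) (φ : ℝ) : (rotMatrix u φ).det = 1 := by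
  have hN : u 0 ^ 2 + u 1 ^ 2 + u 2 ^ 2 = 1 := by
    have h := real_inner_self_eq_norm_sq u
    rw [hu, inner_eq_fin_three] at h
    linear_combination h
  -- the eigenvalues are `c + (1 - c)‖u‖²` (on `u`) and `c ± i s ‖u‖`
  have h : (rotMatrix u φ).det = (cos φ + (1 - cos φ) * (u 0 ^ 2 + u 1 ^ 2 + u 2 ^ 2)) *
      (cos φ ^ 2 + sin φ ^ 2 * (u 0 ^ 2 + u 1 ^ 2 + u 2 ^ 2)) := by
    simp only [rotMatrix, det_fin_three, of_apply, cons_val', cons_val_zero, cons_val_one, cons_val,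
      cons_val_fin_one]
    ring
  rw [h, hN]
  linear_combination sin_sq_add_cos_sq φ

noncomputable def rotSO3 {u : ℝ³} (hu : ‖u‖ = 1) (φ : ℝ) : SO3 :=
  ⟨⟨rotMatrix u φ, rotMatrix_mem_orthogonalGroup hu φ⟩, det_rotMatrix hu φ⟩

def rotationsAbout (u : ℝ³) : Set SO3 :=
  {R | ∃ φ : ℝ, ∀ z, R.1.1 *ᵥ z = rot u φ (WithLp.toLp 2 z)}

lemma rotSO3_mem_rotationsAbout {u : ℝ³} (hu : ‖u‖ = 1) (φ : ℝ) :
    rotSO3 hu φ ∈ rotationsAbout u :=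
  ⟨φ, rotMatrix_mulVec u φ⟩

lemma rotationsAbout_neg (v : ℝ³) : rotationsAbout (-v) = rotationsAbout v := by
  ext R
  constructor
  · rintro ⟨φ, h⟩
    exact ⟨-φ, by simpa [rot_neg] using h⟩
  · rintro ⟨φ, h⟩
    exact ⟨-φ, by simpa [rot_neg] using h⟩

def IsSphericalTriangleSides (a b c : ℝ) : Prop :=
  |a - b| ≤ c ∧ c ≤ a + b ∧ a + b + c ≤ 2 * π

lemma exists_angle_rot_eq {n b x : ℝ³} (hn : ‖n‖ = 1) (hb : ‖b‖ = 1) (hx : ‖x‖ = 1) {ψ : ℝ}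
    (h : IsSphericalTriangleSides (angle n b) (angle b x) ψ) :
    ∃ φ, angle n (rot b φ x) = ψ := by
  set α := angle n b
  set ω := angle b x
  obtain ⟨h₁, h₂, h₃⟩ := h
  have hψ0 : 0 ≤ ψ := (abs_nonneg _).trans h₁
  have hψπ : ψ ≤ π := by linarith
  have hupper : cos ψ ≤ cos (α - ω) := by
    rw [← cos_abs (α - ω)]
    exact cos_le_cos_of_nonneg_of_le_pi (abs_nonneg _) hψπ h₁
  have hlower : cos (α + ω) ≤ cos ψ := by
    rcases le_total (α + ω) π with h | h
    · exact cos_le_cos_of_nonneg_of_le_pi hψ0 h h₂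
    · rw [← cos_two_pi_sub]
      exact cos_le_cos_of_nonneg_of_le_pi hψ0 (by linarith) (by linarith)
  have hc : (cos ψ - inner ℝ n b * inner ℝ b x) ^ 2
      ≤ (1 - inner ℝ n b ^ 2) * (1 - inner ℝ b x ^ 2) := by
    rw [inner_eq_cos_angle_of_norm_eq_one hn hb, inner_eq_cos_angle_of_norm_eq_one hb hx,
      ← sin_sq, ← sin_sq, ← mul_pow]
    rw [cos_add] at hlower
    rw [cos_sub] at hupper
    exact sq_le_sq' (by linarith) (by linarith)
  obtain ⟨φ, hφ⟩ := exists_inner_rot_eq hn hb hx hc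
  refine ⟨φ, ?_⟩
  rw [← arccos_cos hψ0 hψπ, ← hφ, inner_eq_cos_angle_of_norm_eq_one hn ((norm_rot hb φ x).trans hx),
    arccos_cos (angle_nonneg _ _) (angle_le_pi _ _)]

def SameOrbit (G : Subgroup SO3) (x y : ℝ³) : Prop :=
  ∃ R ∈ G, R.1.1 *ᵥ x = y

namespace SameOrbit

variable {G : Subgroup SO3} {x y z : ℝ³}

lemma refl (x : ℝ³) : SameOrbit G x x :=
  ⟨1, one_mem G, one_mulVec _⟩

lemma symm (h : SameOrbit G x y) : SameOrbit G y x := by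
  obtain ⟨R, hR, hRx⟩ := h
  refine ⟨R⁻¹, inv_mem hR, ?_⟩
  show star R.1.1 *ᵥ y = x
  rw [← hRx, mulVec_mulVec, R.1.2.1, one_mulVec]

lemma trans (hxy : SameOrbit G x y) (hyz : SameOrbit G y z) : SameOrbit G x z := by
  obtain ⟨R, hR, hRx⟩ := hxy
  obtain ⟨S, hS, hSy⟩ := hyz
  refine ⟨S * R, mul_mem hS hR, ?_⟩
  show (S.1.1 * R.1.1) *ᵥ x = z
  rw [← mulVec_mulVec, hRx, hSy]

lemma rot {u : ℝ³} (hu : ‖u‖ = 1) (hG : rotationsAbout u ⊆ G) (φ : ℝ) (x : ℝ³) :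
    SameOrbit G x (_root_.rot u φ x) :=
  ⟨rotSO3 hu φ, hG (rotSO3_mem_rotationsAbout hu φ), rotMatrix_mulVec u φ x⟩

end SameOrbit

section TwoAxes

variable {G : Subgroup SO3} {u v : ℝ³}

lemma exists_sameOrbit_angle_eq (hu : ‖u‖ = 1) (hv : ‖v‖ = 1) (hGu : rotationsAbout u ⊆ G)
    (hGv : rotationsAbout v ⊆ G) {x : ℝ³} (hx : ‖x‖ = 1) {γ ψ : ℝ}
    (hγ : IsSphericalTriangleSides (angle u v) (angle u x) γ)
    (hψ : IsSphericalTriangleSides (angle u v) γ ψ) :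
    ∃ y, ‖y‖ = 1 ∧ SameOrbit G x y ∧ angle u y = ψ := by
  obtain ⟨φ₁, h₁⟩ := exists_angle_rot_eq hv hu hx (angle_comm v u ▸ hγ)
  set x₁ := _root_.rot u φ₁ x
  have hx₁ : ‖x₁‖ = 1 := (norm_rot hu φ₁ x).trans hx
  obtain ⟨φ₂, h₂⟩ := exists_angle_rot_eq hu hv hx₁ (h₁ ▸ hψ)
  exact ⟨_root_.rot v φ₂ x₁, (norm_rot hv φ₂ x₁).trans hx₁,
    (SameOrbit.rot hu hGu φ₁ x).trans (SameOrbit.rot hv hGv φ₂ x₁), h₂⟩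

lemma exists_sameOrbit_angle_eq_max (hu : ‖u‖ = 1) (hv : ‖v‖ = 1) (hGu : rotationsAbout u ⊆ G)
    (hGv : rotationsAbout v ⊆ G) (hβ : angle u v ≤ π / 2) {x : ℝ³} (hx : ‖x‖ = 1) :
    ∃ y, ‖y‖ = 1 ∧ SameOrbit G x y ∧ angle u y = max 0 (angle u x - 2 * angle u v) := by
  set β := angle u v
  set θ := angle u x
  have hθ0 : 0 ≤ θ := angle_nonneg u x
  have hθπ : θ ≤ π := angle_le_pi u x
  have hβ0 : 0 ≤ β := angle_nonneg u v
  rcases le_total (2 * β) θ with h | h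
  · rw [max_eq_right (by linarith)]
    refine exists_sameOrbit_angle_eq hu hv hGu hGv hx (γ := θ - β)
      ⟨?_, by linarith, by linarith⟩ ⟨?_, by linarith, by linarith⟩ <;>
    · rw [abs_sub_le_iff]; constructor <;> linarith
  · rw [max_eq_left (by linarith)]
    refine exists_sameOrbit_angle_eq hu hv hGu hGv hx (γ := β)
      ⟨?_, by linarith, by linarith⟩ ⟨by rw [sub_self, abs_zero], by linarith, by linarith⟩
    rw [abs_sub_le_iff]; constructor <;> linarith

lemma sameOrbit_axis (hu : ‖u‖ = 1) (hv : ‖v‖ = 1) (hGu : rotationsAbout u ⊆ G)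
    (hGv : rotationsAbout v ⊆ G) (hβ : angle u v ∈ Set.Ioc 0 (π / 2)) {x : ℝ³} (hx : ‖x‖ = 1) :
    SameOrbit G x u := by
  suffices h : ∀ n : ℕ, ∀ x : ℝ³, ‖x‖ = 1 → angle u x ≤ n * (2 * angle u v) → SameOrbit G x u by
    obtain ⟨n, hn⟩ := exists_nat_ge (angle u x / (2 * angle u v))
    exact h n x hx (by rwa [div_le_iff₀ (by linarith [hβ.1])] at hn)
  intro n
  induction n with
  | zero =>
    intro x hx hθ
    have hθ0 : angle u x = 0 := le_antisymm (by simpa using hθ) (angle_nonneg u x)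
    rw [← eq_of_angle_eq_zero_of_norm_eq hθ0 (hu.trans hx.symm)]
    exact SameOrbit.refl u
  | succ n ih =>
    intro x hx hθ
    obtain ⟨y, hy, hxy, hθy⟩ := exists_sameOrbit_angle_eq_max hu hv hGu hGv hβ.2 hx
    refine hxy.trans (ih y hy ?_)
    rw [hθy]
    push_cast at hθ
    exact max_le (mul_nonneg n.cast_nonneg (by linarith [hβ.1])) (by linarith)

lemma sameOrbit_of_ne_of_ne_neg (hu : ‖u‖ = 1) (hv : ‖v‖ = 1) (hne : v ≠ u) (hne' : v ≠ -u)
    (hGu : rotationsAbout u ⊆ G) (hGv : rotationsAbout v ⊆ G) {x y : ℝ³} (hx : ‖x‖ = 1)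
    (hy : ‖y‖ = 1) : SameOrbit G x y := by
  have angle_pos : ∀ {w : ℝ³}, ‖w‖ = 1 → w ≠ u → 0 < angle u w := fun hw hwu =>
    (angle_nonneg _ _).lt_of_ne fun h => hwu (eq_of_angle_eq_zero_of_norm_eq h.symm
      (hu.trans hw.symm)).symm
  obtain ⟨w, hw, hGw, hβ⟩ :
      ∃ w : ℝ³, ‖w‖ = 1 ∧ rotationsAbout w ⊆ G ∧ angle u w ∈ Set.Ioc 0 (π / 2) := by
    rcases le_total (angle u v) (π / 2) with h | h
    · exact ⟨v, hv, hGv, angle_pos hv hne, h⟩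
    · refine ⟨-v, by rwa [norm_neg], (rotationsAbout_neg v).symm ▸ hGv, angle_pos (by rwa [norm_neg])
        fun h' => hne' (by rw [← h', neg_neg]), ?_⟩
      rw [angle_neg_right]
      linarith
  exact (sameOrbit_axis hu hw hGu hGw hβ hx).trans (sameOrbit_axis hu hw hGu hGw hβ hy).symm

end TwoAxes

/-- The subgroup of SO(3) generated by all rotations about two non-collinear unit axes
`u` and `v` acts transitively on the unit sphere. -/
theorem two_axes_subgroup_transitive (u v : EuclideanSpace ℝ (Fin 3))
    (hu : ‖u‖ = 1) (hv : ‖v‖ = 1) (hne : v ≠ u) (hne' : v ≠ -u) :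
    ∀ x y : EuclideanSpace ℝ (Fin 3), ‖x‖ = 1 → ‖y‖ = 1 →
      ∃ R ∈ Subgroup.closure
          ({R : SO3 | ∃ φ : ℝ, ∀ z, R.1.1.mulVec z = rot u φ (WithLp.toLp 2 z)} ∪
           {R : SO3 | ∃ φ : ℝ, ∀ z, R.1.1.mulVec z = rot v φ (WithLp.toLp 2 z)}),
        R.1.1.mulVec x = y :=
  fun _ _ hx hy => sameOrbit_of_ne_of_ne_neg hu hv hne hne'
    (Set.subset_union_left.trans Subgroup.subset_closure)
    (Set.subset_union_right.trans Subgroup.subset_closure) hx hy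
end

section
/- The subgroup of SO(3) generated by the set of all rotations about two non-collinear unit axes u and v is all of SO(3). -/
/-!
Let `G` be the generated subgroup. An element of SO(3) fixing the unit vector `u` is a rotation
about `u`, so `G` is everything as soon as the orbit `G • u` is the whole unit sphere.
Rotating `u` about `v` and then about `u` reaches every unit vector `w` with
`u ⬝ᵥ w ≥ 2 (u ⬝ᵥ v)² - 1`: a spherical cap around `u`, of positive radius because `v ≠ ±u`.
Translating by elements of `G`, the orbit contains the cap of the same radius around each of its
points, so membership in the orbit is locally constant on the connected sphere.
-/

open Matrix Real Topology

section

variable {R : Type*} [CommRing R]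

theorem Matrix.transpose_mulVec_cross_mulVec (A : Matrix (Fin 3) (Fin 3) R) (x y : Fin 3 → R) :
    Aᵀ *ᵥ ((A *ᵥ x) ⨯₃ (A *ᵥ y)) = A.det • x ⨯₃ y := by
  ext i
  fin_cases i <;>
    simp [cross_apply, det_fin_three, mulVec, dotProduct, Fin.sum_univ_three] <;> ring

theorem Matrix.mulVec_cross_of_mem_specialOrthogonalGroup {A : Matrix (Fin 3) (Fin 3) R}
    (hA : A ∈ specialOrthogonalGroup (Fin 3) R) (x y : Fin 3 → R) :
    A *ᵥ (x ⨯₃ y) = (A *ᵥ x) ⨯₃ (A *ᵥ y) := by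
  obtain ⟨horth, hdet⟩ := mem_specialOrthogonalGroup_iff.1 hA
  rw [← one_smul R (x ⨯₃ y), ← hdet, ← transpose_mulVec_cross_mulVec, mulVec_mulVec,
    (mem_orthogonalGroup_iff _ _).1 horth, one_mulVec]

theorem Matrix.mem_orthogonalGroup_iff_dotProduct_mulVec {n : Type*} [Fintype n] [DecidableEq n]
    {A : Matrix n n R} :
    A ∈ orthogonalGroup n R ↔ ∀ x y : n → R, A *ᵥ x ⬝ᵥ A *ᵥ y = x ⬝ᵥ y := by
  have key : ∀ x y : n → R, A *ᵥ x ⬝ᵥ A *ᵥ y = x ᵥ* (Aᵀ * A) ⬝ᵥ y := fun x y => by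
    rw [dotProduct_mulVec, ← vecMul_transpose, vecMul_vecMul]
  simp_rw [mem_orthogonalGroup_iff', key]
  refine ⟨fun h x y => by rw [h, vecMul_one], fun h => ?_⟩
  ext i j
  simpa [single_one_vecMul, one_apply, Pi.single_apply, eq_comm] using
    h (Pi.single i 1) (Pi.single j 1)

variable [LinearOrder R] [IsStrictOrderedRing R]

theorem dotProduct_self_nonneg {n : Type*} [Fintype n] (v : n → R) : 0 ≤ v ⬝ᵥ v :=
  Finset.sum_nonneg fun i _ => mul_self_nonneg (v i)

theorem dotProduct_le_one {n : Type*} [Fintype n] {u w : n → R} (hu : u ⬝ᵥ u = 1)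
    (hw : w ⬝ᵥ w = 1) : u ⬝ᵥ w ≤ 1 := by
  have := dotProduct_self_nonneg (u - w)
  simp only [dotProduct_sub, sub_dotProduct, hu, hw, dotProduct_comm w u] at this
  linarith

theorem eq_zero_of_dotProduct_eq_zero_of_cross_ne_zero {a b z : Fin 3 → R} (hab : a ⨯₃ b ≠ 0)
    (ha : a ⬝ᵥ z = 0) (hb : b ⬝ᵥ z = 0) (habz : a ⨯₃ b ⬝ᵥ z = 0) : z = 0 := by
  have hcross : a ⨯₃ b ⨯₃ z = 0 := by simp [cross_cross_eq_smul_sub_smul, ha, hb]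
  have key := cross_dot_cross (a ⨯₃ b) z (a ⨯₃ b) z
  rw [hcross, zero_dotProduct, habz, zero_mul, sub_zero, eq_comm, mul_eq_zero] at key
  rcases key with h | h
  · exact absurd (dotProduct_self_eq_zero.1 h) hab
  · exact dotProduct_self_eq_zero.1 h

end

theorem Real.exists_cos_eq_and_sin_eq {a b : ℝ} (h : a ^ 2 + b ^ 2 = 1) :
    ∃ θ, cos θ = a ∧ sin θ = b := by
  obtain ⟨θ, hθ⟩ := (Complex.norm_eq_one_iff ⟨a, b⟩).1 <| by
    rw [Complex.norm_def, Complex.normSq_mk, ← sq, ← sq, h, Real.sqrt_one]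
  exact ⟨θ, by simpa using congrArg Complex.re hθ, by simpa using congrArg Complex.im hθ⟩

theorem sq_real_inner_lt_one {E : Type*} [NormedAddCommGroup E] [InnerProductSpace ℝ E] {x y : E}
    (hx : ‖x‖ = 1) (hy : ‖y‖ = 1) (hxy : x ≠ y) (hxy' : x ≠ -y) : inner ℝ x y ^ 2 < 1 := by
  have h1 : inner ℝ x y ≠ 1 := (inner_eq_one_iff_of_norm_eq_one hx hy).not.2 hxy
  have h2 : inner ℝ x y ≠ -1 := (inner_eq_neg_one_iff_of_norm_eq_one hx hy).not.2 hxy'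
  obtain ⟨hlo, hhi⟩ := real_inner_mem_Icc_of_norm_eq_one hx hy
  nlinarith [lt_of_le_of_ne hlo h2.symm, lt_of_le_of_ne hhi h1]

theorem ofLp_dotProduct_ofLp {ι : Type*} [Fintype ι] (x y : EuclideanSpace ℝ ι) :
    x.ofLp ⬝ᵥ y.ofLp = inner ℝ x y := by
  rw [EuclideanSpace.inner_eq_star_dotProduct, star_trivial, dotProduct_comm]

theorem isPreconnected_setOf_dotProduct_self_eq_one {ι : Type*} [Fintype ι]
    (h : 1 < Fintype.card ι) : IsPreconnected {w : ι → ℝ | w ⬝ᵥ w = 1} := by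
  have hs : {w : ι → ℝ | w ⬝ᵥ w = 1} = WithLp.ofLp '' Metric.sphere (0 : EuclideanSpace ℝ ι) 1 := by
    ext w
    refine ⟨fun hw => ⟨WithLp.toLp 2 w, ?_, rfl⟩, ?_⟩
    · rw [mem_sphere_zero_iff_norm, ← pow_eq_one_iff_of_nonneg (norm_nonneg _) two_ne_zero,
        ← real_inner_self_eq_norm_sq, ← ofLp_dotProduct_ofLp]
      exact hw
    · rintro ⟨x, hx, rfl⟩
      rw [Set.mem_ofPred_eq, ofLp_dotProduct_ofLp, real_inner_self_eq_norm_sq,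
        mem_sphere_zero_iff_norm.1 hx, one_pow]
  rw [hs]
  refine (isPreconnected_sphere ?_ 0 1).image _ (PiLp.continuous_ofLp 2 _).continuousOn
  rw [← Module.finrank_eq_rank, finrank_euclideanSpace]
  exact_mod_cast h

noncomputable def rodrigues (u : Fin 3 → ℝ) (φ : ℝ) : (Fin 3 → ℝ) →ₗ[ℝ] Fin 3 → ℝ where
  toFun x := cos φ • x + sin φ • u ⨯₃ x + ((1 - cos φ) * (u ⬝ᵥ x)) • u
  map_add' x y := by simp only [map_add, dotProduct_add]; module
  map_smul' a x := by simp only [map_smul, dotProduct_smul, smul_eq_mul, RingHom.id_apply]; module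

theorem rodrigues_apply (u : Fin 3 → ℝ) (φ : ℝ) (x : Fin 3 → ℝ) :
    rodrigues u φ x = cos φ • x + sin φ • u ⨯₃ x + ((1 - cos φ) * (u ⬝ᵥ x)) • u :=
  rfl

theorem ofLp_rot (u : EuclideanSpace ℝ (Fin 3)) (φ : ℝ) (x : EuclideanSpace ℝ (Fin 3)) :
    (rot u φ x).ofLp = rodrigues u.ofLp φ x.ofLp := by
  simp [rot, rodrigues_apply, EuclideanSpace.inner_eq_star_dotProduct, dotProduct_comm]

theorem rodrigues_of_dotProduct_eq_zero {u x : Fin 3 → ℝ} (φ : ℝ) (hx : u ⬝ᵥ x = 0) :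
    rodrigues u φ x = cos φ • x + sin φ • u ⨯₃ x := by
  simp [rodrigues_apply, hx]

section UnitAxis

variable {u : Fin 3 → ℝ}

theorem rodrigues_self (hu : u ⬝ᵥ u = 1) (φ : ℝ) : rodrigues u φ u = u := by
  simp [rodrigues_apply, hu, cross_self]

theorem rodrigues_dotProduct_rodrigues (hu : u ⬝ᵥ u = 1) (φ : ℝ) (x y : Fin 3 → ℝ) :
    rodrigues u φ x ⬝ᵥ rodrigues u φ y = x ⬝ᵥ y := by
  have hux : u ⨯₃ x ⬝ᵥ u = 0 := by rw [dotProduct_comm, dot_self_cross]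
  have hxy : x ⬝ᵥ u ⨯₃ y = -(y ⬝ᵥ u ⨯₃ x) := by
    rw [triple_product_permutation x, triple_product_permutation y, ← cross_anticomm x,
      dotProduct_neg]
  simp only [rodrigues_apply, add_dotProduct, dotProduct_add, smul_dotProduct, dotProduct_smul,
    smul_eq_mul, cross_dot_cross, dot_self_cross, hux, hxy, hu]
  rw [dotProduct_comm (u ⨯₃ x) y, dotProduct_comm x u]
  linear_combination (x ⬝ᵥ y - u ⬝ᵥ x * u ⬝ᵥ y) * sin_sq_add_cos_sq φ

theorem det_toMatrix'_rodrigues (hu : u ⬝ᵥ u = 1) (φ : ℝ) :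
    (LinearMap.toMatrix' (rodrigues u φ)).det = 1 := by
  have hu3 : u 0 * u 0 + u 1 * u 1 + u 2 * u 2 = 1 := by
    simpa [dotProduct, Fin.sum_univ_three] using hu
  rw [det_fin_three]
  simp only [LinearMap.toMatrix'_apply, rodrigues_apply, cross_apply, dotProduct,
    Fin.sum_univ_three, Pi.add_apply, Pi.smul_apply, smul_eq_mul, Pi.single_apply]
  norm_num [Fin.ext_iff, cons_val_two, tail_cons, head_cons]
  linear_combination ((1 - cos φ) * (cos φ ^ 2 + sin φ ^ 2 * (u 0 * u 0 + u 1 * u 1 + u 2 * u 2))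
    + sin φ ^ 2) * hu3 + sin_sq_add_cos_sq φ

theorem exists_rodrigues_eq_of_dotProduct_eq_zero (hu : u ⬝ᵥ u = 1) {p q : Fin 3 → ℝ}
    (hp : u ⬝ᵥ p = 0) (hq : u ⬝ᵥ q = 0) (hpq : p ⬝ᵥ p = q ⬝ᵥ q) :
    ∃ ψ, rodrigues u ψ p = q := by
  rcases eq_or_ne p 0 with rfl | hp0
  · rw [zero_dotProduct, eq_comm, dotProduct_self_eq_zero] at hpq
    exact ⟨0, by simp [hpq]⟩
  set m := p ⬝ᵥ p with hm_def
  have hm : 0 < m := (dotProduct_self_nonneg p).lt_of_ne' (dotProduct_self_eq_zero.not.2 hp0)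
  set n := u ⨯₃ p with hn
  have hnn : n ⬝ᵥ n = m := by simp [n, cross_dot_cross, hu, hp, dotProduct_comm p u, hm_def]
  have hun : u ⬝ᵥ n = 0 := dot_self_cross u p
  have hpn : p ⬝ᵥ n = 0 := dot_cross_self u p
  have hn0 : n ≠ 0 := fun h => hm.ne' (by rw [← hnn, h, zero_dotProduct])
  -- `p` and `n` span the plane orthogonal to `u`
  have hq_eq : m • q = (p ⬝ᵥ q) • p + (n ⬝ᵥ q) • n := by
    refine (sub_eq_zero.1 (eq_zero_of_dotProduct_eq_zero_of_cross_ne_zero hn0 ?_ ?_ ?_)).symm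
    · simp [dotProduct_sub, dotProduct_add, dotProduct_smul, hq, hp, hun]
    · simp [dotProduct_sub, dotProduct_add, dotProduct_smul, hpn, ← hm_def, mul_comm]
    · simp [← hn, dotProduct_sub, dotProduct_add, dotProduct_smul, hnn, dotProduct_comm n p, hpn,
        mul_comm]
  have hsq : (p ⬝ᵥ q / m) ^ 2 + (n ⬝ᵥ q / m) ^ 2 = 1 := by
    have := congrArg (q ⬝ᵥ ·) hq_eq
    simp only [dotProduct_smul, dotProduct_add, smul_eq_mul, ← hpq] at this
    rw [div_pow, div_pow, ← add_div, div_eq_one_iff_eq (by positivity), dotProduct_comm q,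
      dotProduct_comm q] at *
    linear_combination -this
  obtain ⟨ψ, hcos, hsin⟩ := Real.exists_cos_eq_and_sin_eq hsq
  refine ⟨ψ, smul_right_injective _ hm.ne' ?_⟩
  simp only [rodrigues_of_dotProduct_eq_zero ψ hp, ← hn, hcos, hsin, hq_eq, smul_add, smul_smul]
  field_simp

theorem exists_rodrigues_eq (hu : u ⬝ᵥ u = 1) {x y : Fin 3 → ℝ} (hxy : x ⬝ᵥ x = y ⬝ᵥ y)
    (h : u ⬝ᵥ x = u ⬝ᵥ y) : ∃ ψ, rodrigues u ψ x = y := by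
  have horth : ∀ z, u ⬝ᵥ z = u ⬝ᵥ x → u ⬝ᵥ (z - (u ⬝ᵥ x) • u) = 0 := fun z hz => by
    simp [dotProduct_sub, hz, hu]
  have hnorm : (x - (u ⬝ᵥ x) • u) ⬝ᵥ (x - (u ⬝ᵥ x) • u) =
      (y - (u ⬝ᵥ x) • u) ⬝ᵥ (y - (u ⬝ᵥ x) • u) := by
    simp only [dotProduct_sub, sub_dotProduct, dotProduct_smul, smul_dotProduct, smul_eq_mul,
      dotProduct_comm _ u, hu, hxy, h]
  obtain ⟨ψ, hψ⟩ :=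
    exists_rodrigues_eq_of_dotProduct_eq_zero hu (horth x rfl) (horth y h.symm) hnorm
  refine ⟨ψ, ?_⟩
  rw [map_sub, map_smul, rodrigues_self hu] at hψ
  simpa using hψ

theorem exists_rodrigues_rodrigues_eq (hu : u ⬝ᵥ u = 1) {v w : Fin 3 → ℝ} (hv : v ⬝ᵥ v = 1)
    (huv : (u ⬝ᵥ v) ^ 2 < 1) (hw : w ⬝ᵥ w = 1) (h : 2 * (u ⬝ᵥ v) ^ 2 - 1 ≤ u ⬝ᵥ w) :
    ∃ φ ψ, rodrigues u ψ (rodrigues v φ u) = w := by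
  have hw1 := dotProduct_le_one hu hw
  have hpos : 0 < 1 - (u ⬝ᵥ v) ^ 2 := by linarith
  -- `u ⬝ᵥ rodrigues v φ u = c ^ 2 + (1 - c ^ 2) * cos φ`, where `c = u ⬝ᵥ v`
  set φ := arccos ((u ⬝ᵥ w - (u ⬝ᵥ v) ^ 2) / (1 - (u ⬝ᵥ v) ^ 2))
  have hcos : cos φ = (u ⬝ᵥ w - (u ⬝ᵥ v) ^ 2) / (1 - (u ⬝ᵥ v) ^ 2) :=
    cos_arccos (by rw [le_div_iff₀ hpos]; linarith) (by rw [div_le_one hpos]; linarith)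
  have hheight : u ⬝ᵥ rodrigues v φ u = u ⬝ᵥ w := by
    simp only [rodrigues_apply, dotProduct_add, dotProduct_smul, smul_eq_mul, hu, dot_cross_self,
      dotProduct_comm v u, hcos]
    field_simp
    ring
  obtain ⟨ψ, hψ⟩ := exists_rodrigues_eq hu (by rw [rodrigues_dotProduct_rodrigues hv, hu, hw])
    hheight
  exact ⟨φ, ψ, hψ⟩

end UnitAxis

namespace SO3

noncomputable def rotation {u : Fin 3 → ℝ} (hu : u ⬝ᵥ u = 1) (φ : ℝ) : SO3 :=
  ⟨⟨LinearMap.toMatrix' (rodrigues u φ), mem_orthogonalGroup_iff_dotProduct_mulVec.2 fun x y => by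
    simpa only [LinearMap.toMatrix'_mulVec] using rodrigues_dotProduct_rodrigues hu φ x y⟩,
    det_toMatrix'_rodrigues hu φ⟩

theorem rotation_mulVec {u : Fin 3 → ℝ} (hu : u ⬝ᵥ u = 1) (φ : ℝ) (x : Fin 3 → ℝ) :
    (rotation hu φ : Matrix (Fin 3) (Fin 3) ℝ) *ᵥ x = rodrigues u φ x :=
  LinearMap.toMatrix'_mulVec _ x

theorem mem_specialOrthogonalGroup (g : SO3) :
    (g : Matrix (Fin 3) (Fin 3) ℝ) ∈ specialOrthogonalGroup (Fin 3) ℝ :=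
  mem_specialOrthogonalGroup_iff.2 ⟨g.1.2, g.2⟩

theorem dotProduct_mulVec_mulVec (g : SO3) (x y : Fin 3 → ℝ) :
    (g : Matrix (Fin 3) (Fin 3) ℝ) *ᵥ x ⬝ᵥ (g : Matrix (Fin 3) (Fin 3) ℝ) *ᵥ y = x ⬝ᵥ y :=
  mem_orthogonalGroup_iff_dotProduct_mulVec.1 g.1.2 x y

theorem mul_mulVec (g h : SO3) (x : Fin 3 → ℝ) :
    ((g * h : SO3) : Matrix (Fin 3) (Fin 3) ℝ) *ᵥ x =
      (g : Matrix (Fin 3) (Fin 3) ℝ) *ᵥ ((h : Matrix (Fin 3) (Fin 3) ℝ) *ᵥ x) :=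
  (mulVec_mulVec _ _ _).symm

theorem inv_mulVec_mulVec (g : SO3) (x : Fin 3 → ℝ) :
    ((g⁻¹ : SO3) : Matrix (Fin 3) (Fin 3) ℝ) *ᵥ ((g : Matrix (Fin 3) (Fin 3) ℝ) *ᵥ x) = x := by
  rw [← mul_mulVec, inv_mul_cancel]
  exact one_mulVec x

theorem mulVec_inv_mulVec (g : SO3) (x : Fin 3 → ℝ) :
    (g : Matrix (Fin 3) (Fin 3) ℝ) *ᵥ (((g⁻¹ : SO3) : Matrix (Fin 3) (Fin 3) ℝ) *ᵥ x) = x := by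
  rw [← mul_mulVec, mul_inv_cancel]
  exact one_mulVec x

theorem eq_one_of_mulVec_eq_self {g : SO3} {a b : Fin 3 → ℝ} (hab : a ⨯₃ b ≠ 0)
    (ha : (g : Matrix (Fin 3) (Fin 3) ℝ) *ᵥ a = a) (hb : (g : Matrix (Fin 3) (Fin 3) ℝ) *ᵥ b = b) :
    g = 1 := by
  have hcross : (g : Matrix (Fin 3) (Fin 3) ℝ) *ᵥ (a ⨯₃ b) = a ⨯₃ b := by
    rw [mulVec_cross_of_mem_specialOrthogonalGroup (mem_specialOrthogonalGroup g), ha, hb]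
  have horth : ∀ c z, (g : Matrix (Fin 3) (Fin 3) ℝ) *ᵥ c = c →
      c ⬝ᵥ ((g : Matrix (Fin 3) (Fin 3) ℝ) *ᵥ z - z) = 0 := fun c z hc => by
    rw [dotProduct_sub, sub_eq_zero]
    nth_rw 1 [← hc]
    exact dotProduct_mulVec_mulVec g c z
  refine Subtype.ext (Subtype.ext (ext_iff_mulVec.2 fun z => ?_))
  simpa [sub_eq_zero] using eq_zero_of_dotProduct_eq_zero_of_cross_ne_zero hab (horth a z ha)
    (horth b z hb) (horth _ z hcross)

theorem exists_eq_rotation_of_mulVec_eq_self {u : Fin 3 → ℝ} (hu : u ⬝ᵥ u = 1) {g : SO3}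
    (hg : (g : Matrix (Fin 3) (Fin 3) ℝ) *ᵥ u = u) : ∃ φ, g = rotation hu φ := by
  obtain ⟨y, hy⟩ : ∃ y, u ⨯₃ y ≠ 0 := by
    have hu0 : u ≠ 0 := by rintro rfl; simp at hu
    obtain ⟨y, hy⟩ := exists_linearIndependent_pair_of_one_lt_finrank
      (by rw [Module.finrank_fin_fun]; norm_num) hu0
    exact ⟨y, crossProduct_ne_zero_iff_linearIndependent.2 hy⟩
  set p := u ⨯₃ y
  have hp : u ⬝ᵥ p = 0 := dot_self_cross u y
  have hup : u ⨯₃ p ≠ 0 := by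
    intro h
    have := cross_dot_cross u p u p
    rw [h, zero_dotProduct, hu, hp, dotProduct_comm p u, hp, one_mul, mul_zero, sub_zero,
      eq_comm, dotProduct_self_eq_zero] at this
    exact hy this
  obtain ⟨φ, hφ⟩ := exists_rodrigues_eq_of_dotProduct_eq_zero hu hp
    (q := (g : Matrix (Fin 3) (Fin 3) ℝ) *ᵥ p) (by rw [← hg, dotProduct_mulVec_mulVec, hp])
    (dotProduct_mulVec_mulVec g p p).symm
  refine ⟨φ, (inv_mul_eq_one.1 (eq_one_of_mulVec_eq_self hup ?_ ?_)).symm⟩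
  · have hRu : (rotation hu φ : Matrix (Fin 3) (Fin 3) ℝ) *ᵥ u = u := by
      rw [rotation_mulVec, rodrigues_self hu]
    rw [mul_mulVec, hg]
    simpa only [hRu] using inv_mulVec_mulVec (rotation hu φ) u
  · rw [mul_mulVec, ← hφ, ← rotation_mulVec hu, inv_mulVec_mulVec]

theorem eq_top_of_forall_exists_mulVec_eq {G : Subgroup SO3} {u : Fin 3 → ℝ} (hu : u ⬝ᵥ u = 1)
    (hrot : ∀ φ, rotation hu φ ∈ G)
    (htrans : ∀ w, w ⬝ᵥ w = 1 → ∃ g ∈ G, (g : Matrix (Fin 3) (Fin 3) ℝ) *ᵥ u = w) : G = ⊤ := by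
  refine eq_top_iff.2 fun R _ => ?_
  obtain ⟨g, hg, hgu⟩ := htrans ((R : Matrix (Fin 3) (Fin 3) ℝ) *ᵥ u)
    (by rw [dotProduct_mulVec_mulVec, hu])
  obtain ⟨φ, hφ⟩ := exists_eq_rotation_of_mulVec_eq_self hu (g := g⁻¹ * R)
    (by rw [mul_mulVec, ← hgu, inv_mulVec_mulVec])
  rw [← mul_inv_cancel_left g R, hφ]
  exact mul_mem hg (hrot φ)

theorem exists_mem_mulVec_eq_of_cap {G : Subgroup SO3} {u : Fin 3 → ℝ} (hu : u ⬝ᵥ u = 1)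
    {δ : ℝ} (hδ : δ < 1)
    (hcap : ∀ w, w ⬝ᵥ w = 1 → δ < u ⬝ᵥ w → ∃ g ∈ G, (g : Matrix (Fin 3) (Fin 3) ℝ) *ᵥ u = w)
    {w : Fin 3 → ℝ} (hw : w ⬝ᵥ w = 1) : ∃ g ∈ G, (g : Matrix (Fin 3) (Fin 3) ℝ) *ᵥ u = w := by
  set O := {w | ∃ g ∈ G, (g : Matrix (Fin 3) (Fin 3) ℝ) *ᵥ u = w}
  have hcapO : ∀ x ∈ O, ∀ y : Fin 3 → ℝ, y ⬝ᵥ y = 1 → δ < x ⬝ᵥ y → y ∈ O := by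
    rintro _ ⟨g, hg, rfl⟩ y hy hxy
    obtain ⟨h, hh, hhu⟩ := hcap (((g⁻¹ : SO3) : Matrix (Fin 3) (Fin 3) ℝ) *ᵥ y)
      (by rw [dotProduct_mulVec_mulVec, hy])
      (by rwa [← dotProduct_mulVec_mulVec g, mulVec_inv_mulVec])
    exact ⟨g * h, mul_mem hg hh, by rw [mul_mulVec, hhu, mulVec_inv_mulVec]⟩
  -- membership in `O` is locally constant on the connected unit sphere
  refine ((isPreconnected_setOf_dotProduct_self_eq_one (by simp)).induction₂
    (fun x y => x ∈ O ↔ y ∈ O) (fun x hx => ?_) (fun _ _ _ _ _ _ => Iff.trans)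
    (fun _ _ _ _ => Iff.symm) hu hw).1 ⟨1, one_mem G, one_mulVec u⟩
  have hx1 : δ < x ⬝ᵥ x := by rwa [show x ⬝ᵥ x = 1 from hx]
  have hnear : ∀ᶠ y in 𝓝 x, δ < x ⬝ᵥ y :=
    ((continuous_const.dotProduct continuous_id).tendsto x).eventually (lt_mem_nhds hx1)
  filter_upwards [nhdsWithin_le_nhds hnear, self_mem_nhdsWithin] with y hxy hy
  exact ⟨fun hxO => hcapO x hxO y hy hxy, fun hyO => hcapO y hyO x hx (by rwa [dotProduct_comm])⟩

theorem eq_top_of_rotation_mem {G : Subgroup SO3} {u v : Fin 3 → ℝ} (hu : u ⬝ᵥ u = 1)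
    (hv : v ⬝ᵥ v = 1) (huv : (u ⬝ᵥ v) ^ 2 < 1) (hGu : ∀ φ, rotation hu φ ∈ G)
    (hGv : ∀ φ, rotation hv φ ∈ G) : G = ⊤ := by
  refine eq_top_of_forall_exists_mulVec_eq hu hGu fun w hw =>
    exists_mem_mulVec_eq_of_cap hu (δ := 2 * (u ⬝ᵥ v) ^ 2 - 1) (by linarith)
      (fun w hw hcap => ?_) hw
  obtain ⟨φ, ψ, h⟩ := exists_rodrigues_rodrigues_eq hu hv huv hw hcap.le
  refine ⟨rotation hu ψ * rotation hv φ, mul_mem (hGu ψ) (hGv φ), ?_⟩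
  rw [mul_mulVec, rotation_mulVec, rotation_mulVec, h]

end SO3

/-- The subgroup of SO(3) generated by all rotations about two non-collinear unit axes
`u` and `v` is all of SO(3). -/
theorem two_axes_generate_SO3 (u v : EuclideanSpace ℝ (Fin 3))
    (hu : ‖u‖ = 1) (hv : ‖v‖ = 1) (hne : v ≠ u) (hne' : v ≠ -u) :
    Subgroup.closure
        ({R : SO3 | ∃ φ : ℝ, ∀ z, R.1.1.mulVec z = rot u φ (WithLp.toLp 2 z)} ∪
         {R : SO3 | ∃ φ : ℝ, ∀ z, R.1.1.mulVec z = rot v φ (WithLp.toLp 2 z)}) = ⊤ := by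
  have hunit : ∀ {a : EuclideanSpace ℝ (Fin 3)}, ‖a‖ = 1 → a.ofLp ⬝ᵥ a.ofLp = 1 := fun ha => by
    rw [ofLp_dotProduct_ofLp, real_inner_self_eq_norm_sq, ha, one_pow]
  have hrot : ∀ {a : EuclideanSpace ℝ (Fin 3)} (ha : ‖a‖ = 1) (φ : ℝ) (z : Fin 3 → ℝ),
      (SO3.rotation (hunit ha) φ).1.1.mulVec z = rot a φ (WithLp.toLp 2 z) := fun ha φ z => by
    rw [SO3.rotation_mulVec, ofLp_rot]
  refine SO3.eq_top_of_rotation_mem (hunit hu) (hunit hv) ?_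
    (fun φ => Subgroup.subset_closure (Or.inl ⟨φ, hrot hu φ⟩))
    (fun φ => Subgroup.subset_closure (Or.inr ⟨φ, hrot hv φ⟩))
  rw [ofLp_dotProduct_ofLp]
  exact sq_real_inner_lt_one hu hv hne.symm fun h => hne' (by rw [h, neg_neg])
end
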